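/- Let r and s be non-negative integers with r ≥ 3s+8. Then F_v(2_r; r−s−2) ≤ r+2s+9; that is, there exists a finite simple graph on r+2s+9 vertices that contains no clique on r−s−2 vertices and has chromatic number at least r+1. -/

import Mathlib

open SimpleGraph Finset

/-! ### The 17-vertex block: a K₆-free graph with independence number 2
(the complement of a (3,6)-Ramsey graph on 17 vertices). -/

def g17Masks : List ℕ :=
  [114206, 108381, 65099, 129127, 81827, 129496, 124846, 122736, 93938, 32215,
   103383, 29629, 118461, 19327, 48108, 87279, 38395]

def adjB (a b : ℕ) : Bool := (g17Masks.getD a 0).testBit b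

def goodB (v u : ℕ) : Bool := decide (v < u) && adjB v u

/-- DFS for a clique of size `k` (listed in increasing order) inside `cand`. -/
def ext : ℕ → List ℕ → Bool
  | 0, _ => true
  | k+1, cand => cand.any (fun v => ext k (cand.filter (goodB v)))

theorem ext_false : ext 6 (List.range 17) = false := by decide

theorem g17symm : ∀ a b : Fin 17, adjB a.val b.val = true → adjB b.val a.val = true := by decide

theorem g17irrefl : ∀ a : Fin 17, ¬ adjB a.val a.val = true := by decide

theorem g17_indep : ∀ a b c : Fin 17, a ≠ b → a ≠ c → b ≠ c →
    (adjB a.val b.val = true ∨ adjB a.val c.val = true ∨ adjB b.val c.val = true) := by decide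

def G17 : SimpleGraph (Fin 17) where
  Adj a b := adjB a.val b.val = true
  symm := ⟨fun a b h => g17symm a b h⟩
  loopless := ⟨fun a h => g17irrefl a h⟩

instance : DecidableRel G17.Adj := fun _ _ => inferInstanceAs (Decidable (_ = true))

theorem ext_sound : ∀ (L cand : List ℕ), L.Pairwise (fun a b => goodB a b = true) →
    (∀ v ∈ L, v ∈ cand) → ext L.length cand = true := by
  intro L
  induction L with
  | nil => intro cand _ _; rfl
  | cons v L ih =>
    intro cand hp hm
    rcases List.pairwise_cons.mp hp with ⟨hrel, htail⟩
    show (cand.any (fun w => ext L.length (cand.filter (goodB w)))) = true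
    rw [List.any_eq_true]
    refine ⟨v, hm v (List.mem_cons_self (a := v) (l := L)), ih _ htail ?_⟩
    intro u hu
    exact List.mem_filter.mpr ⟨hm u (List.mem_cons_of_mem _ hu), hrel u hu⟩

theorem g17_cliquefree (t : Finset (Fin 17)) (ht : G17.IsClique ↑t) : t.card ≤ 5 := by
  by_contra hgt
  obtain ⟨u, hut, hu6⟩ := Finset.exists_subset_card_eq (show 6 ≤ t.card by omega)
  have hu : G17.IsClique ↑u := ht.subset (by exact_mod_cast hut)
  set l : List (Fin 17) := u.sort (· ≤ ·) with hl
  have hsort : List.Pairwise (· < ·) l := u.sortedLT_sort.pairwise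
  have hpw : (l.map Fin.val).Pairwise (fun a b => goodB a b = true) := by
    rw [List.pairwise_map]
    rw [List.pairwise_iff_forall_sublist] at hsort ⊢
    intro a b hsub
    have hab : a < b := hsort hsub
    have hma : a ∈ u := (Finset.mem_sort (· ≤ ·)).mp (hsub.subset (List.mem_cons_self (a := a) (l := [b])))
    have hmb : b ∈ u := (Finset.mem_sort (· ≤ ·)).mp
      (hsub.subset (List.mem_cons_of_mem a (List.mem_cons_self (a := b) (l := []))))
    have hadj : G17.Adj a b := hu hma hmb (ne_of_lt hab)
    show (decide (a.val < b.val) && adjB a.val b.val) = true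
    rw [Bool.and_eq_true, decide_eq_true_eq]
    exact ⟨hab, hadj⟩
  have hmem : ∀ v ∈ l.map Fin.val, v ∈ List.range 17 := by
    intro v hv
    rw [List.mem_map] at hv
    obtain ⟨x, _, rfl⟩ := hv
    exact List.mem_range.mpr x.isLt
  have hlen : (l.map Fin.val).length = 6 := by
    rw [List.length_map, hl, Finset.length_sort, hu6]
  have := ext_sound (l.map Fin.val) (List.range 17) hpw hmem
  rw [hlen, ext_false] at this
  exact Bool.false_ne_true this

/-! ### The pentagon block -/

theorem c5irr : ∀ a : Fin 5, ¬ a = a + 1 := by decide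

def C5 : SimpleGraph (Fin 5) where
  Adj a b := b = a + 1 ∨ a = b + 1
  symm := ⟨fun _ _ h => Or.symm h⟩
  loopless := ⟨fun a h => c5irr a (h.elim (fun h => h) (fun h => h))⟩

instance : DecidableRel C5.Adj := fun _ _ => inferInstanceAs (Decidable (_ ∨ _))

theorem c5_tri : ∀ a b c : Fin 5, C5.Adj a b → C5.Adj a c → C5.Adj b c → False := by decide

theorem c5_2col : ∀ g : Fin 5 → Fin 2, ∃ a b, C5.Adj a b ∧ g a = g b := by decide

/-! ### Generic counting lemmas for colorings -/

theorem le_card_image_of_no_coloring {α β : Type*} [Fintype α] [DecidableEq β]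
    (G : SimpleGraph α) (k : ℕ)
    (hk : ∀ g : α → Fin k, ∃ a b, G.Adj a b ∧ g a = g b)
    (f : α → β) (hf : ∀ a b, G.Adj a b → f a ≠ f b) :
    k + 1 ≤ (Finset.univ.image f).card := by
  by_contra hle
  have hcard : Fintype.card ↥(Finset.univ.image f) ≤ Fintype.card (Fin k) := by
    rw [Fintype.card_coe, Fintype.card_fin]
    omega
  obtain ⟨emb⟩ := Function.Embedding.nonempty_of_card_le hcard
  obtain ⟨a, b, hab, heq⟩ := hk fun a => emb ⟨f a, Finset.mem_image_of_mem f (Finset.mem_univ a)⟩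
  exact hf a b hab (Subtype.ext_iff.mp (emb.injective heq))

theorem g17_colors {β : Type*} [DecidableEq β] (f : Fin 17 → β)
    (hf : ∀ a b, G17.Adj a b → f a ≠ f b) : 9 ≤ (Finset.univ.image f).card := by
  have h2 : ∀ a ∈ Finset.univ.image f, (Finset.univ.filter fun x => f x = a).card ≤ 2 := by
    intro a _
    by_contra hgt
    obtain ⟨x, hx, y, hy, z, hz, hxy, hxz, hyz⟩ := Finset.two_lt_card.mp (not_le.mp hgt)
    rw [Finset.mem_filter] at hx hy hz
    rcases g17_indep x y z hxy hxz hyz with hadj | hadj | hadj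
    · exact hf x y hadj (by rw [hx.2, hy.2])
    · exact hf x z hadj (by rw [hx.2, hz.2])
    · exact hf y z hadj (by rw [hy.2, hz.2])
  have hle := Finset.card_le_mul_card_image (f := f) Finset.univ 2 h2
  rw [Finset.card_univ, Fintype.card_fin] at hle
  omega

/-! ### The main construction: `K_m + s·C₅ + G17` -/

abbrev BigV (m s : ℕ) := Fin m ⊕ (Fin s × Fin 5) ⊕ Fin 17

def blockIdx {m s : ℕ} : BigV m s → Fin m ⊕ Fin s ⊕ Unit
  | .inl i => .inl i
  | .inr (.inl p) => .inr (.inl p.1)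
  | .inr (.inr _) => .inr (.inr ())

def innerAdj {m s : ℕ} : BigV m s → BigV m s → Prop
  | .inr (.inl p), .inr (.inl q) => C5.Adj p.2 q.2
  | .inr (.inr a), .inr (.inr b) => G17.Adj a b
  | _, _ => False

def BigG (m s : ℕ) : SimpleGraph (BigV m s) where
  Adj u v := blockIdx u ≠ blockIdx v ∨ innerAdj u v
  symm := by
    constructor
    intro u v hadj
    rcases hadj with hb | hi
    · exact Or.inl hb.symm
    · right
      rcases u with i | p | a <;> rcases v with j | q | b <;>
        simp only [innerAdj] at hi ⊢
      · exact hi.symm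
      · exact hi.symm
  loopless := by
    constructor
    intro u hadj
    rcases hadj with hb | hi
    · exact hb rfl
    · rcases u with i | p | a <;> simp only [innerAdj] at hi
      · exact C5.irrefl hi
      · exact G17.irrefl hi

theorem blockIdx_inl {m s : ℕ} {u : BigV m s} {i : Fin m}
    (h : blockIdx u = Sum.inl i) : u = Sum.inl i := by
  rcases u with j | p | a <;> simp_all [blockIdx]

theorem blockIdx_pent {m s : ℕ} {u : BigV m s} {k : Fin s}
    (h : blockIdx u = Sum.inr (Sum.inl k)) : ∃ a : Fin 5, u = Sum.inr (Sum.inl (k, a)) := by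
  rcases u with j | ⟨k', a⟩ | a <;> simp_all [blockIdx]

theorem blockIdx_g17 {m s : ℕ} {u : BigV m s}
    (h : blockIdx u = Sum.inr (Sum.inr ())) : ∃ a : Fin 17, u = Sum.inr (Sum.inr a) := by
  rcases u with j | p | a <;> simp_all [blockIdx]

theorem bigG_cliquefree (m s : ℕ) : (BigG m s).CliqueFree (m + 2 * s + 6) := by
  classical
  intro t ht
  have hcl : (BigG m s).IsClique ↑t := ht.isClique
  have hcard := ht.card_eq
  have hfib := Finset.card_eq_sum_card_fiberwise
    (f := blockIdx) (s := t) (t := Finset.univ) (fun x _ => Finset.mem_univ _)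
  have hfib1 : ∀ i : Fin m, (t.filter fun u => blockIdx u = Sum.inl i).card ≤ 1 := by
    intro i
    apply Finset.card_le_one.mpr
    intro u hu v hv
    rw [Finset.mem_filter] at hu hv
    rw [blockIdx_inl hu.2, blockIdx_inl hv.2]
  have hfib5 : ∀ k : Fin s,
      (t.filter fun u => blockIdx u = Sum.inr (Sum.inl k)).card ≤ 2 := by
    intro k
    by_contra hgt
    obtain ⟨u, hu, v, hv, w, hw, huv, huw, hvw⟩ := Finset.two_lt_card.mp (not_le.mp hgt)
    rw [Finset.mem_filter] at hu hv hw
    obtain ⟨a, rfl⟩ := blockIdx_pent hu.2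
    obtain ⟨b, rfl⟩ := blockIdx_pent hv.2
    obtain ⟨c, rfl⟩ := blockIdx_pent hw.2
    have hab : C5.Adj a b := by
      rcases hcl hu.1 hv.1 huv with hb | hi
      · exact absurd rfl hb
      · exact hi
    have hac : C5.Adj a c := by
      rcases hcl hu.1 hw.1 huw with hb | hi
      · exact absurd rfl hb
      · exact hi
    have hbc : C5.Adj b c := by
      rcases hcl hv.1 hw.1 hvw with hb | hi
      · exact absurd rfl hb
      · exact hi
    exact c5_tri a b c hab hac hbc
  have hfib17 : (t.filter fun u => blockIdx u = Sum.inr (Sum.inr ())).card ≤ 5 := by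
    set F := t.filter fun u => blockIdx u = Sum.inr (Sum.inr ()) with hF
    have hshape : ∀ u ∈ F, ∃ a : Fin 17, u = Sum.inr (Sum.inr a) := by
      intro u hu
      rw [hF, Finset.mem_filter] at hu
      exact blockIdx_g17 hu.2
    set pos : BigV m s → Fin 17 := fun u => match u with
      | .inr (.inr a) => a
      | _ => 0 with hpos
    have hinj : Set.InjOn pos ↑F := by
      intro u hu v hv huv
      obtain ⟨a, rfl⟩ := hshape u hu
      obtain ⟨b, rfl⟩ := hshape v hv
      simp only [hpos] at huv
      rw [huv]
    have hcl17 : G17.IsClique ↑(F.image pos) := by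
      intro x hx y hy hxy
      rw [Finset.coe_image] at hx hy
      obtain ⟨u, hu, rfl⟩ := hx
      obtain ⟨v, hv, rfl⟩ := hy
      have huv : u ≠ v := fun hh => hxy (by rw [hh])
      obtain ⟨a, rfl⟩ := hshape u hu
      obtain ⟨b, rfl⟩ := hshape v hv
      have hu' : (Sum.inr (Sum.inr a) : BigV m s) ∈ t := (Finset.mem_filter.mp hu).1
      have hv' : (Sum.inr (Sum.inr b) : BigV m s) ∈ t := (Finset.mem_filter.mp hv).1
      rcases hcl hu' hv' huv with hb | hi
      · exact absurd rfl hb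
      · exact hi
    have hcards : (F.image pos).card = F.card := Finset.card_image_of_injOn hinj
    have := g17_cliquefree (F.image pos) hcl17
    omega
  have hbound : ∑ b : Fin m ⊕ Fin s ⊕ Unit,
      (t.filter fun u => blockIdx u = b).card ≤ m + 2 * s + 5 := by
    rw [Fintype.sum_sum_type, Fintype.sum_sum_type]
    have e1 : ∑ i : Fin m, (t.filter fun u => blockIdx u = Sum.inl i).card ≤ m := by
      calc ∑ i : Fin m, (t.filter fun u => blockIdx u = Sum.inl i).card
          ≤ ∑ _i : Fin m, 1 := Finset.sum_le_sum (fun i _ => hfib1 i)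
        _ = m := by simp
    have e2 : ∑ k : Fin s,
        (t.filter fun u => blockIdx u = Sum.inr (Sum.inl k)).card ≤ 2 * s := by
      calc ∑ k : Fin s, (t.filter fun u => blockIdx u = Sum.inr (Sum.inl k)).card
          ≤ ∑ _k : Fin s, 2 := Finset.sum_le_sum (fun k _ => hfib5 k)
        _ = 2 * s := by simp [mul_comm]
    have e3 : ∑ x : Unit,
        (t.filter fun u => blockIdx u = Sum.inr (Sum.inr x)).card ≤ 5 := by
      simpa using hfib17
    omega
  omega

theorem bigG_chrom (m s N : ℕ) (hc : (BigG m s).Colorable N) : m + 3 * s + 9 ≤ N := by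
  classical
  obtain ⟨C⟩ := hc
  set A : Fin m ⊕ Fin s ⊕ Unit → Finset (Fin N) :=
    fun b => (Finset.univ.filter (fun u : BigV m s => blockIdx u = b)).image C with hA
  have hdisj : ∀ x ∈ (Finset.univ : Finset (Fin m ⊕ Fin s ⊕ Unit)), ∀ y ∈ Finset.univ,
      x ≠ y → Disjoint (A x) (A y) := by
    intro x _ y _ hxy
    rw [Finset.disjoint_left]
    intro c hcx hcy
    rw [hA, Finset.mem_image] at hcx hcy
    obtain ⟨u, hu, hcu⟩ := hcx
    obtain ⟨v, hv, hcv⟩ := hcy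
    rw [Finset.mem_filter] at hu hv
    have hadj : (BigG m s).Adj u v := Or.inl (by rw [hu.2, hv.2]; exact hxy)
    exact C.valid hadj (by rw [hcu, hcv])
  have hsum : ∑ b : Fin m ⊕ Fin s ⊕ Unit, (A b).card ≤ N := by
    rw [← Finset.card_biUnion hdisj]
    calc (Finset.univ.biUnion A).card ≤ (Finset.univ : Finset (Fin N)).card :=
          Finset.card_le_card (Finset.subset_univ _)
      _ = N := by simp
  have h1 : ∀ i : Fin m, 1 ≤ (A (Sum.inl i)).card := by
    intro i
    rw [Nat.succ_le_iff, Finset.card_pos]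
    exact ⟨C (Sum.inl i), Finset.mem_image_of_mem _
      (Finset.mem_filter.mpr ⟨Finset.mem_univ _, rfl⟩)⟩
  have h5 : ∀ k : Fin s, 3 ≤ (A (Sum.inr (Sum.inl k))).card := by
    intro k
    have hf : ∀ a b, C5.Adj a b →
        C (Sum.inr (Sum.inl (k, a))) ≠ C (Sum.inr (Sum.inl (k, b))) := by
      intro a b hab
      exact C.valid (Or.inr hab)
    have h3 := le_card_image_of_no_coloring C5 2 c5_2col
      (fun x => C (Sum.inr (Sum.inl (k, x)))) hf
    refine le_trans h3 (Finset.card_le_card ?_)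
    intro c hc
    rw [Finset.mem_image] at hc
    obtain ⟨x, _, rfl⟩ := hc
    exact Finset.mem_image_of_mem _ (Finset.mem_filter.mpr ⟨Finset.mem_univ _, rfl⟩)
  have h17 : 9 ≤ (A (Sum.inr (Sum.inr ()))).card := by
    have hf : ∀ a b, G17.Adj a b →
        C (Sum.inr (Sum.inr a)) ≠ C (Sum.inr (Sum.inr b)) := by
      intro a b hab
      exact C.valid (Or.inr hab)
    have h9 := g17_colors (fun x => C (Sum.inr (Sum.inr x))) hf
    refine le_trans h9 (Finset.card_le_card ?_)
    intro c hc
    rw [Finset.mem_image] at hc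
    obtain ⟨x, _, rfl⟩ := hc
    exact Finset.mem_image_of_mem _ (Finset.mem_filter.mpr ⟨Finset.mem_univ _, rfl⟩)
  have hbound : m + 3 * s + 9 ≤ ∑ b : Fin m ⊕ Fin s ⊕ Unit, (A b).card := by
    rw [Fintype.sum_sum_type, Fintype.sum_sum_type]
    have e1 : m ≤ ∑ i : Fin m, (A (Sum.inl i)).card := by
      calc m = ∑ _i : Fin m, 1 := by simp
        _ ≤ _ := Finset.sum_le_sum (fun i _ => h1 i)
    have e2 : 3 * s ≤ ∑ k : Fin s, (A (Sum.inr (Sum.inl k))).card := by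
      calc 3 * s = ∑ _k : Fin s, 3 := by simp [mul_comm]
        _ ≤ _ := Finset.sum_le_sum (fun k _ => h5 k)
    have e3 : 9 ≤ ∑ x : Unit, (A (Sum.inr (Sum.inr x))).card := by
      simpa using h17
    omega
  omega

/-- The vertex Folkman number `F_v(2_r; q)`: the minimum number of vertices of a
`K_q`-free finite simple graph with chromatic number at least `r + 1`. -/
noncomputable def folkman (r q : ℕ) : ℕ :=
  sInf {n : ℕ | ∃ G : SimpleGraph (Fin n),
    G.CliqueFree q ∧ (r + 1 : ℕ∞) ≤ G.chromaticNumber}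

theorem stmt_6 (r s : ℕ) (h : 3 * s + 8 ≤ r) :
    (∃ G : SimpleGraph (Fin (r + 2 * s + 9)),
        G.CliqueFree (r - s - 2) ∧ (r + 1 : ℕ∞) ≤ G.chromaticNumber) ∧
    folkman r (r - s - 2) ≤ r + 2 * s + 9 := by
  set m : ℕ := r - 3 * s - 8 with hm
  have hcardV : Fintype.card (BigV m s) = r + 2 * s + 9 := by
    simp only [Fintype.card_sum, Fintype.card_prod, Fintype.card_fin]
    omega
  set e : BigV m s ≃ Fin (r + 2 * s + 9) := Fintype.equivFinOfCardEq hcardV with he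
  set G' : SimpleGraph (Fin (r + 2 * s + 9)) :=
    { Adj := fun x y => (BigG m s).Adj (e.symm x) (e.symm y)
      symm := ⟨fun x y hxy => (BigG m s).adj_symm hxy⟩
      loopless := ⟨fun x hx => (BigG m s).irrefl hx⟩ } with hG'
  have hcf : G'.CliqueFree (r - s - 2) := by
    intro t ht
    have hnum : m + 2 * s + 6 = r - s - 2 := by omega
    apply bigG_cliquefree m s (t.image e.symm)
    constructor
    · intro x hx y hy hxy
      rw [Finset.coe_image] at hx hy
      obtain ⟨a, ha, rfl⟩ := hx
      obtain ⟨b, hb, rfl⟩ := hy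
      have hab : a ≠ b := fun hh => hxy (by rw [hh])
      exact ht.isClique ha hb hab
    · rw [Finset.card_image_of_injective _ e.symm.injective, ht.card_eq]
      omega
  have hcol : ∀ N : ℕ, G'.Colorable N → r + 1 ≤ N := by
    intro N hN
    obtain ⟨C⟩ := hN
    have hbig : (BigG m s).Colorable N := by
      refine ⟨SimpleGraph.Coloring.mk (fun v => C (e v)) ?_⟩
      intro a b hab
      apply C.valid
      show (BigG m s).Adj (e.symm (e a)) (e.symm (e b))
      rw [e.symm_apply_apply, e.symm_apply_apply]
      exact hab
    have := bigG_chrom m s N hbig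
    omega
  have hchrom : (r + 1 : ℕ∞) ≤ G'.chromaticNumber := by
    have hnotcol : ¬ G'.Colorable r := fun hc => by have := hcol r hc; omega
    have hnotle : ¬ (G'.chromaticNumber ≤ (r : ℕ∞)) := fun hle =>
      hnotcol (SimpleGraph.chromaticNumber_le_iff_colorable.mp hle)
    have hlt : (r : ℕ∞) < G'.chromaticNumber := not_le.mp hnotle
    have := (ENat.add_one_le_iff (show (r : ℕ∞) ≠ ⊤ from ENat.coe_ne_top r)).mpr hlt
    exact this
  exact ⟨⟨G', hcf, hchrom⟩, Nat.sInf_le ⟨G', hcf, hchrom⟩⟩
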